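/- Let n≥2 be an integer and g a nonnegative integer with gcd(n,g)=1. Then det C_{n,g}(P) = det(Q_g) · [ (1 − P_{n+1})^{n−1} + P_n^{n−2} · Σ_{i=1}^{n−1} P_i · ((1 − P_{n+1})/P_n)^{i−1} ]. -/

import Mathlib

/-- The `g`-circulant matrix of size `n` with first row `(a 0, a 1, …, a (n-1))`:
its `(i,j)` entry (0-indexed) equals `a ((j - i*g) mod n)`. -/
def gCirc {α : Type*} (n g : ℕ) (a : ℕ → α) : Matrix (Fin n) (Fin n) α :=
  Matrix.of fun i j => a ((j.val + (n - (i.val * g) % n)) % n)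

/-- `Q_g`: the `g`-circulant matrix with first row `(1,0,…,0)`. -/
def Qg (n g : ℕ) : Matrix (Fin n) (Fin n) ℝ :=
  gCirc n g (fun m => if m = 0 then (1 : ℝ) else 0)

/-!
Row `i` of `C_{n,g}` is row `i g mod n` of the ordinary circulant `C_{n,1}`, so
`C_{n,g} = Q_g C_{n,1}`. The eigenvalues of `C_{n,1}` are `f(ζ^k)`, where `ζ` is a primitive
`n`-th root of unity and `f(x) = ∑ P_{m+1} x^m`. Since `f(x) (1 - 2x - x²) = (1 - P_{n+1}) - P_n x`
whenever `x^n = 1`, we get `det C_{n,1} · ∏_k (1 - 2ζ^k - ζ^{2k}) = (1 - P_{n+1})^n - P_n^n`.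
Factoring `1 - 2x - x²` over `-1 ± √2`, the Binet formula evaluates the product on the left to
`1 + (-1)^n - 2P_{n+1} + 2P_n`, which is negative for `n ≥ 2`. Dividing by it, the same
generating-function identity at `x = (1 - P_{n+1}) / P_n` puts the quotient in the stated form.
-/

open Finset

section Circulant

variable {α R : Type*} {n : ℕ}

lemma gCirc_apply [NeZero n] (g : ℕ) (a : ℕ → α) (i j : Fin n) :
    gCirc n g a i j = a (j - Fin.ofNat n (i * g) : Fin n) := by
  simp only [gCirc, Matrix.of_apply, Fin.val_sub, Fin.val_ofNat, add_comm]

lemma gCirc_one_apply [NeZero n] (a : ℕ → α) (i j : Fin n) :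
    gCirc n 1 a i j = a (j - i : Fin n) := by
  rw [gCirc_apply, mul_one, Fin.ofNat_val_eq_self]

lemma gCirc_eq_mul [NeZero n] [NonAssocSemiring R] (g : ℕ) (a : ℕ → R) :
    gCirc n g a = gCirc n g (fun m => if m = 0 then 1 else 0) * gCirc n 1 a := by
  ext i j
  simp only [Matrix.mul_apply, gCirc_apply, mul_one, Fin.ofNat_val_eq_self, Fin.val_eq_zero_iff,
    sub_eq_zero, ite_mul, one_mul, zero_mul, sum_ite_eq', mem_univ, if_true]

lemma IsPrimitiveRoot.pow_val_add [CommMonoid R] {ζ : R} (hζ : IsPrimitiveRoot ζ n)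
    (i j : Fin n) : ζ ^ ((i + j : Fin n) : ℕ) = ζ ^ (i : ℕ) * ζ ^ (j : ℕ) := by
  rw [Fin.val_add, ← pow_add, ← pow_mod_orderOf ζ (i + j : ℕ), ← hζ.eq_orderOf]

/-- The columns of the Vandermonde matrix of the powers of `ζ` are eigenvectors of every
circulant matrix. -/
lemma det_gCirc_one [NeZero n] [CommRing R] [IsDomain R] {ζ : R} (hζ : IsPrimitiveRoot ζ n)
    (a : ℕ → R) :
    (gCirc n 1 a).det = ∏ k ∈ range n, ∑ m ∈ range n, a m * (ζ ^ k) ^ m := by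
  set F := Matrix.vandermonde fun i : Fin n => ζ ^ (i : ℕ)
  have hF : F.det ≠ 0 := Matrix.det_vandermonde_ne_zero_iff.mpr fun i j h =>
    Fin.ext (hζ.pow_inj i.isLt j.isLt h)
  have heigen : gCirc n 1 a * F =
      F * Matrix.diagonal fun k : Fin n => ∑ m : Fin n, a m * (ζ ^ (k : ℕ)) ^ (m : ℕ) := by
    ext i k
    rw [Matrix.mul_diagonal, Matrix.mul_apply, ← Equiv.sum_comp (Equiv.addLeft i), mul_sum]
    refine sum_congr rfl fun m _ => ?_
    simp only [gCirc_one_apply, Equiv.coe_addLeft, add_sub_cancel_left, F,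
      Matrix.vandermonde_apply, hζ.pow_val_add]
    ring
  have := congrArg Matrix.det heigen
  rw [Matrix.det_mul, Matrix.det_mul, Matrix.det_diagonal, mul_comm] at this
  rw [mul_left_cancel₀ hF this, ← Fin.prod_univ_eq_prod_range
    (fun k => ∑ m ∈ range n, a m * (ζ ^ k) ^ m)]
  exact prod_congr rfl fun k _ => Fin.sum_univ_eq_sum_range (fun m => a m * (ζ ^ (k : ℕ)) ^ m) n

lemma IsPrimitiveRoot.pow_sub_pow_eq_prod [CommRing R] [IsDomain R] {ζ : R}
    (hζ : IsPrimitiveRoot ζ n) (hn : 0 < n) (x y : R) :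
    x ^ n - y ^ n = ∏ k ∈ range n, (x - ζ ^ k * y) := by
  simpa [Polynomial.eval_prod] using
    congrArg (Polynomial.eval x) (X_pow_sub_C_eq_prod hζ hn (rfl : y ^ n = y ^ n))

end Circulant

structure IsPell {R : Type*} [Semiring R] (p : ℕ → R) : Prop where
  zero : p 0 = 0
  one : p 1 = 1
  add_two : ∀ m, p (m + 2) = 2 * p (m + 1) + p m

namespace IsPell

section CommRing

variable {R S : Type*} [CommRing R] {p : ℕ → R}

lemma map [CommRing S] (hp : IsPell p) (f : R →+* S) : IsPell fun m => f (p m) where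
  zero := by rw [hp.zero, map_zero]
  one := by rw [hp.one, map_one]
  add_two m := by rw [hp.add_two, map_add, map_mul, map_ofNat]

lemma sq_succ_sub (hp : IsPell p) (m : ℕ) :
    p (m + 1) ^ 2 - 2 * p m * p (m + 1) - p m ^ 2 = (-1) ^ m := by
  induction m with
  | zero => simp [hp.zero, hp.one]
  | succ m ih =>
    rw [hp.add_two, pow_succ]
    linear_combination -ih

/-- Truncating the generating function `∑ p (k+1) z^k = 1 / (1 - 2z - z²)`. -/
lemma sum_mul_one_sub_two_mul_sub_sq (hp : IsPell p) (z : R) (n : ℕ) :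
    (∑ k ∈ range n, p (k + 1) * z ^ k) * (1 - 2 * z - z ^ 2) =
      1 - p (n + 1) * z ^ n - p n * z ^ (n + 1) := by
  induction n with
  | zero => simp [hp.zero, hp.one]
  | succ n ih =>
    rw [sum_range_succ, add_mul]
    linear_combination ih + z ^ (n + 1) * hp.add_two n

/-- A Binet formula: for `s = ±√2`, `-1 + s` runs over the roots of `x² + 2x - 1`. -/
lemma neg_one_add_pow (hp : IsPell p) {s : R} (hs : s ^ 2 = 2) (m : ℕ) :
    (-1 + s) ^ m = (-1) ^ m * (p (m + 1) - p m - p m * s) := by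
  induction m with
  | zero => simp [hp.zero, hp.one]
  | succ m ih =>
    rw [pow_succ, ih, hp.add_two]
    linear_combination -(-1) ^ m * p m * hs

lemma prod_one_sub_two_mul_sub_sq [IsDomain R] (hp : IsPell p) {n : ℕ} (hn : 0 < n) {ζ s : R}
    (hζ : IsPrimitiveRoot ζ n) (hs : s ^ 2 = 2) :
    ∏ k ∈ range n, (1 - 2 * ζ ^ k - (ζ ^ k) ^ 2) = 1 + (-1) ^ n - 2 * p (n + 1) + 2 * p n := by
  have hfactor : ∀ k ∈ range n, 1 - 2 * ζ ^ k - (ζ ^ k) ^ 2 =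
      -1 * ((-1 + s - ζ ^ k * 1) * (-1 + -s - ζ ^ k * 1)) := fun k _ => by
    linear_combination -hs
  rw [prod_congr rfl hfactor, prod_mul_distrib, prod_mul_distrib, prod_const, card_range,
    ← hζ.pow_sub_pow_eq_prod hn, ← hζ.pow_sub_pow_eq_prod hn, hp.neg_one_add_pow hs,
    hp.neg_one_add_pow (by rwa [neg_sq] : (-s) ^ 2 = 2)]
  have hsign : ((-1 : R) ^ n) ^ 2 = 1 := by rw [← pow_mul, mul_comm, pow_mul, neg_one_sq, one_pow]
  linear_combination ((-1) ^ n) ^ 3 * hp.sq_succ_sub n - ((-1) ^ n) ^ 3 * p n ^ 2 * hs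
    + (((-1) ^ n) ^ 2 + 1 - 2 * (p (n + 1) - p n)) * hsign

lemma det_gCirc_one_mul [IsDomain R] (hp : IsPell p) {n : ℕ} [NeZero n] {ζ s : R}
    (hζ : IsPrimitiveRoot ζ n) (hs : s ^ 2 = 2) :
    (gCirc n 1 fun m => p (m + 1)).det * (1 + (-1) ^ n - 2 * p (n + 1) + 2 * p n) =
      (1 - p (n + 1)) ^ n - p n ^ n := by
  have hn : 0 < n := NeZero.pos n
  rw [det_gCirc_one hζ, ← hp.prod_one_sub_two_mul_sub_sq hn hζ hs, ← prod_mul_distrib,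
    hζ.pow_sub_pow_eq_prod hn]
  refine prod_congr rfl fun k _ => ?_
  have hk : (ζ ^ k) ^ n = 1 := by rw [← pow_mul, mul_comm, pow_mul, hζ.pow_eq_one, one_pow]
  rw [hp.sum_mul_one_sub_two_mul_sub_sq, pow_succ, hk]
  ring

end CommRing

lemma pow_sub_pow_eq_mul {K : Type*} [Field K] {p : ℕ → K} (hp : IsPell p) {n : ℕ} (hn : 2 ≤ n)
    (hpn : p n ≠ 0) :
    (1 - p (n + 1)) ^ n - p n ^ n =
      ((1 - p (n + 1)) ^ (n - 1) +
          p n ^ (n - 2) * ∑ i ∈ Icc 1 (n - 1), p i * ((1 - p (n + 1)) / p n) ^ (i - 1)) *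
        (1 + (-1) ^ n - 2 * p (n + 1) + 2 * p n) := by
  obtain ⟨k, rfl⟩ : ∃ k, n = k + 2 := ⟨n - 2, by omega⟩
  simp only [show k + 2 - 1 = k + 1 by omega, Nat.add_sub_cancel]
  have hsum_eq : ∑ i ∈ Icc 1 (k + 1), p i * ((1 - p (k + 2 + 1)) / p (k + 2)) ^ (i - 1) =
      ∑ j ∈ range (k + 1), p (j + 1) * ((1 - p (k + 2 + 1)) / p (k + 2)) ^ j := by
    rw [← Ico_add_one_right_eq_Icc, sum_Ico_eq_sum_range]
    simp only [add_tsub_cancel_right, add_comm 1]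
  rw [hsum_eq]
  generalize hz : (1 - p (k + 2 + 1)) / p (k + 2) = z
  have ha : 1 - p (k + 2 + 1) = z * p (k + 2) := by rw [← hz, div_mul_cancel₀ _ hpn]
  have hP3 : p (k + 2 + 1) = 1 - z * p (k + 2) := by linear_combination -ha
  have hrec : 1 - z * p (k + 2) = 2 * p (k + 2) + p (k + 1) := hP3 ▸ hp.add_two (k + 1)
  have hcassini := hp.sq_succ_sub (k + 2)
  rw [hP3] at hcassini
  have hsum : (∑ j ∈ range (k + 1), p (j + 1) * z ^ j) * (1 - 2 * z - z ^ 2) =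
      1 - p (k + 2) * z ^ (k + 1) - p (k + 1) * z ^ (k + 2) :=
    hp.sum_mul_one_sub_two_mul_sub_sq z (k + 1)
  rw [ha, hP3]
  linear_combination p (k + 2) ^ (k + 2) * hsum + z ^ (k + 2) * p (k + 2) ^ (k + 2) * hrec
    + ((z * p (k + 2)) ^ (k + 1) + p (k + 2) ^ k * ∑ j ∈ range (k + 1), p (j + 1) * z ^ j) *
      hcassini

section Ordered

variable {R : Type*} [CommRing R] [LinearOrder R] [IsStrictOrderedRing R] {p : ℕ → R}

lemma natCast_le (hp : IsPell p) (m : ℕ) : (m : R) ≤ p m := by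
  induction m using Nat.twoStepInduction with
  | zero => rw [hp.zero, Nat.cast_zero]
  | one => rw [hp.one, Nat.cast_one]
  | more m ih₀ ih₁ =>
    rw [hp.add_two]
    push_cast at ih₁ ⊢
    linarith [(Nat.cast_nonneg m : (0 : R) ≤ m)]

lemma one_add_neg_one_pow_sub_neg (hp : IsPell p) {n : ℕ} (hn : 2 ≤ n) :
    1 + (-1) ^ n - 2 * p (n + 1) + 2 * p n < 0 := by
  obtain ⟨k, rfl⟩ : ∃ k, n = k + 2 := ⟨n - 2, by omega⟩
  have hsign : (-1 : R) ^ (k + 2) ≤ 1 := by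
    rcases neg_one_pow_eq_or R (k + 2) with h | h <;> norm_num [h]
  have h₁ := hp.natCast_le (k + 1)
  have h₂ := hp.natCast_le (k + 2)
  push_cast at h₁ h₂
  rw [hp.add_two (k + 1)]
  linarith [(Nat.cast_nonneg k : (0 : R) ≤ k)]

end Ordered

lemma det_gCirc_one_mul_real {P : ℕ → ℝ} (hp : IsPell P) (n : ℕ) [NeZero n] :
    (gCirc n 1 fun m => P (m + 1)).det * (1 + (-1) ^ n - 2 * P (n + 1) + 2 * P n) =
      (1 - P (n + 1)) ^ n - P n ^ n := by
  have hs : ((√2 : ℝ) : ℂ) ^ 2 = 2 := by norm_cast; exact Real.sq_sqrt zero_le_two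
  have hdet : ((gCirc n 1 fun m => P (m + 1)).det : ℂ) =
      (gCirc n 1 fun m => (P (m + 1) : ℂ)).det := Complex.ofRealHom.map_det _
  apply Complex.ofReal_injective
  push_cast
  rw [hdet]
  exact (hp.map Complex.ofRealHom).det_gCirc_one_mul
    (Complex.isPrimitiveRoot_exp n (NeZero.ne n)) hs

end IsPell

theorem det_gCirc_pell_general
    (P : ℕ → ℝ) (hP0 : P 0 = 0) (hP1 : P 1 = 1)
    (hrec : ∀ m : ℕ, P (m + 2) = 2 * P (m + 1) + P m)
    (n r : ℕ) (hn : 2 ≤ n) :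
    (gCirc n r (fun m => P (m + 1))).det =
      (Qg n r).det *
        ((1 - P (n + 1)) ^ (n - 1) +
          P n ^ (n - 2) *
            ∑ i ∈ Finset.Icc 1 (n - 1),
              P i * ((1 - P (n + 1)) / P n) ^ (i - 1)) := by
  have hp : IsPell P := ⟨hP0, hP1, hrec⟩
  have : NeZero n := ⟨by omega⟩
  have hd := (hp.one_add_neg_one_pow_sub_neg hn).ne
  have hPn : P n ≠ 0 := ((by norm_cast; omega : (0 : ℝ) < n).trans_le (hp.natCast_le n)).ne'
  rw [gCirc_eq_mul, Matrix.det_mul, ← mul_left_inj' hd, mul_assoc, hp.det_gCirc_one_mul_real,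
    hp.pow_sub_pow_eq_mul hn hPn, ← mul_assoc]
  rfl

/-- Determinant of the g-circulant matrix of Pell numbers. -/
theorem det_gCirc_pell
    (P : ℕ → ℝ) (hP0 : P 0 = 0) (hP1 : P 1 = 1)
    (hrec : ∀ m : ℕ, P (m + 2) = 2 * P (m + 1) + P m)
    (n r : ℕ) (hn : 2 ≤ n) (hgcd : Nat.gcd n r = 1) :
    (gCirc n r (fun m => P (m + 1))).det =
      (Qg n r).det *
        ((1 - P (n + 1)) ^ (n - 1) +
          P n ^ (n - 2) *
            ∑ i ∈ Finset.Icc 1 (n - 1),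
              P i * ((1 - P (n + 1)) / P n) ^ (i - 1)) :=
  det_gCirc_pell_general P hP0 hP1 hrec n r hn
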